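/- For n ≥ 7, the f-vector of the simplicial complex NI[P_n^2] is (f_{-1}, f_0, f_1, f_2, f_3, f_4) = (1, n, 4n-14, 6n-30, 4n-23, n-6). -/

import Mathlib

noncomputable section

/-- The face `{x_{a+1}, …, x_{b+1}}` (0-indexed: `{j : Fin n | a ≤ j ≤ b}`). -/
def faceIcc (n a b : ℕ) : Finset (Fin n) :=
  Finset.univ.filter (fun j : Fin n => a ≤ (j : ℕ) ∧ (j : ℕ) ≤ b)

/-- The facets of the simplicial complex `NI[P_n²]` (for `n ≥ 7`), 1-indexed in the paper:
`F_1 = {x_1,x_2,x_3}`, `F_{n-4} = {x_{n-2},x_{n-1},x_n}`, and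
`F_i = {x_i,…,x_{i+4}}` for `2 ≤ i ≤ n-5`. -/
def niFacets (n : ℕ) : Finset (Finset (Fin n)) :=
  insert (faceIcc n 0 2) (insert (faceIcc n (n - 3) (n - 1))
    ((Finset.Icc 1 (n - 6)).image fun a => faceIcc n a (a + 4)))

/-- The simplicial complex `NI[P_n²]`: all subsets of the facets. -/
def niComplex (n : ℕ) : Finset (Finset (Fin n)) :=
  Finset.univ.filter (fun A : Finset (Fin n) => ∃ F ∈ niFacets n, A ⊆ F)

/-- `fVec n i` is the number of faces of `NI[P_n²]` with exactly `i` elements,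
i.e. the entry `f_{i-1}` of the `f`-vector. -/
def fVec (n i : ℕ) : ℕ :=
  ((niComplex n).filter (fun A => A.card = i)).card

/-- The condition on (min, max) for a nonempty set to be a face. -/
def ncond (n m M : ℕ) : Prop :=
  M + 1 ≤ 3 ∨ n ≤ m + 3 ∨ (1 ≤ m ∧ M + 2 ≤ n ∧ M ≤ m + 4)

def mnv {n : ℕ} (A : Finset (Fin n)) : ℕ :=
  if h : A.Nonempty then (A.min' h : ℕ) else 0

def mxv {n : ℕ} (A : Finset (Fin n)) : ℕ :=
  if h : A.Nonempty then (A.max' h : ℕ) else 0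

lemma mem_faceIcc {n a b : ℕ} {j : Fin n} :
    j ∈ faceIcc n a b ↔ a ≤ (j : ℕ) ∧ (j : ℕ) ≤ b := by
  simp [faceIcc]

lemma mem_niComplex {n : ℕ} {A : Finset (Fin n)} :
    A ∈ niComplex n ↔ ∃ F ∈ niFacets n, A ⊆ F := by
  simp [niComplex]

lemma face_iff {n : ℕ} (hn : 7 ≤ n) {A : Finset (Fin n)} (hA : A.Nonempty) :
    A ∈ niComplex n ↔ ncond n (A.min' hA : ℕ) (A.max' hA : ℕ) := by
  rw [mem_niComplex]
  constructor
  · rintro ⟨F, hF, hsub⟩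
    have hm := hsub (A.min'_mem hA)
    have hM := hsub (A.max'_mem hA)
    simp only [niFacets, Finset.mem_insert, Finset.mem_image] at hF
    rcases hF with h | h | ⟨a, ha, h⟩
    · subst h; rw [mem_faceIcc] at hM; unfold ncond; omega
    · subst h; rw [mem_faceIcc] at hm; unfold ncond; omega
    · subst h
      rw [mem_faceIcc] at hm hM
      rw [Finset.mem_Icc] at ha
      unfold ncond; omega
  · intro hc
    set m := (A.min' hA : ℕ) with hm
    set M := (A.max' hA : ℕ) with hM
    have hjm : ∀ j ∈ A, m ≤ (j : ℕ) ∧ (j : ℕ) ≤ M := fun j hj =>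
      ⟨Fin.le_def.mp (A.min'_le j hj), Fin.le_def.mp (A.le_max' j hj)⟩
    rcases hc with h | h | ⟨h1, h2, h3⟩
    · refine ⟨faceIcc n 0 2, ?_, fun j hj => mem_faceIcc.mpr ⟨Nat.zero_le _, ?_⟩⟩
      · exact Finset.mem_insert_self _ _
      · have := (hjm j hj).2; omega
    · refine ⟨faceIcc n (n - 3) (n - 1), ?_, fun j hj => mem_faceIcc.mpr ⟨?_, ?_⟩⟩
      · exact Finset.mem_insert_of_mem (Finset.mem_insert_self _ _)
      · have := (hjm j hj).1; omega
      · have := j.isLt; omega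
    · obtain ⟨a, ha1, ha2, ha3, ha4⟩ : ∃ a, 1 ≤ a ∧ a ≤ n - 6 ∧ a ≤ m ∧ M ≤ a + 4 := by
        rcases le_total m (n - 6) with h | h
        · exact ⟨m, by omega⟩
        · exact ⟨n - 6, by omega⟩
      refine ⟨faceIcc n a (a + 4), ?_, fun j hj => mem_faceIcc.mpr ⟨?_, ?_⟩⟩
      · simp only [niFacets, Finset.mem_insert, Finset.mem_image]
        exact Or.inr (Or.inr ⟨a, Finset.mem_Icc.mpr ⟨ha1, ha2⟩, rfl⟩)
      · have := (hjm j hj).1; omega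
      · have := (hjm j hj).2; omega

lemma fiber_card {n : ℕ} (hn : 7 ≤ n) {p : ℕ × ℕ} {k : ℕ} (hab : p.1 < p.2) (hb : p.2 < n)
    (hc : ncond n p.1 p.2) (hk : 2 ≤ k) :
    (((niComplex n).filter fun A => A.card = k).filter
      (fun A => (mnv A, mxv A) = p)).card = (p.2 - p.1 - 1).choose (k - 2) := by
  obtain ⟨a, b⟩ := p
  simp only at hab hb hc ⊢
  have ha : a < n := hab.trans hb
  set a' : Fin n := ⟨a, ha⟩ with ha'
  set b' : Fin n := ⟨b, hb⟩ with hb'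
  have hab' : a' < b' := Fin.lt_def.mpr hab
  have key : (((niComplex n).filter fun A => A.card = k).filter
      (fun A => (mnv A, mxv A) = (a, b))).card
      = (Finset.powersetCard (k - 2) (Finset.Ioo a' b')).card := by
    apply Finset.card_bij' (fun A _ => A \ {a', b'}) (fun S _ => insert a' (insert b' S))
    case hi =>
      intro A hA
      simp only [Finset.mem_filter] at hA
      obtain ⟨⟨hAc, hAk⟩, hAab⟩ := hA
      have hne : A.Nonempty := Finset.card_pos.mp (by omega)
      have hmin : A.min' hne = a' := by
        have := hAab
        simp only [Prod.mk.injEq, mnv, mxv, dif_pos hne] at this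
        exact Fin.ext this.1
      have hmax : A.max' hne = b' := by
        have := hAab
        simp only [Prod.mk.injEq, mnv, mxv, dif_pos hne] at this
        exact Fin.ext this.2
      rw [Finset.mem_powersetCard]
      constructor
      · intro j hj
        simp only [Finset.mem_sdiff, Finset.mem_insert, Finset.mem_singleton, not_or] at hj
        obtain ⟨hjA, hj1, hj2⟩ := hj
        rw [Finset.mem_Ioo]
        constructor
        · exact lt_of_le_of_ne (hmin ▸ A.min'_le j hjA) (Ne.symm hj1)
        · exact lt_of_le_of_ne (hmax ▸ A.le_max' j hjA) hj2
      · have hsub : ({a', b'} : Finset (Fin n)) ⊆ A := by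
          intro x hx
          simp only [Finset.mem_insert, Finset.mem_singleton] at hx
          rcases hx with rfl | rfl
          · exact hmin ▸ A.min'_mem hne
          · exact hmax ▸ A.max'_mem hne
        rw [Finset.card_sdiff_of_subset hsub, hAk, Finset.card_insert_of_notMem (by simp [hab'.ne]),
          Finset.card_singleton]
    case hj =>
      intro S hS
      rw [Finset.mem_powersetCard] at hS
      obtain ⟨hSsub, hScard⟩ := hS
      have hSmem : ∀ x ∈ S, a' < x ∧ x < b' := fun x hx => Finset.mem_Ioo.mp (hSsub hx)
      have haS : a' ∉ S := fun h => absurd (hSmem a' h).1 (lt_irrefl a')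
      have hbS : b' ∉ S := fun h => absurd (hSmem b' h).2 (lt_irrefl b')
      set B := insert a' (insert b' S) with hB
      have hcard : B.card = k := by
        rw [hB, Finset.card_insert_of_notMem (by simp [hab'.ne, haS]),
          Finset.card_insert_of_notMem hbS, hScard]
        omega
      have hBne : B.Nonempty := ⟨a', by simp [hB]⟩
      have hmin : B.min' hBne = a' := by
        apply le_antisymm (Finset.min'_le B a' (by simp [hB]))
        apply Finset.le_min'
        intro y hy
        simp only [hB, Finset.mem_insert] at hy
        rcases hy with rfl | rfl | hy
        · exact le_refl _
        · exact hab'.le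
        · exact (hSmem y hy).1.le
      have hmax : B.max' hBne = b' := by
        apply le_antisymm
        · apply Finset.max'_le
          intro y hy
          simp only [hB, Finset.mem_insert] at hy
          rcases hy with rfl | rfl | hy
          · exact hab'.le
          · exact le_refl _
          · exact (hSmem y hy).2.le
        · exact Finset.le_max' B b' (by simp [hB])
      simp only [Finset.mem_filter]
      refine ⟨⟨?_, hcard⟩, ?_⟩
      · rw [face_iff hn hBne, hmin, hmax]
        exact hc
      · simp only [mnv, mxv, dif_pos hBne, hmin, hmax, Prod.mk.injEq]
        exact ⟨rfl, rfl⟩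
    case left_inv =>
      intro A hA
      simp only [Finset.mem_filter] at hA
      obtain ⟨⟨hAc, hAk⟩, hAab⟩ := hA
      have hne : A.Nonempty := Finset.card_pos.mp (by omega)
      have hmin : a' ∈ A := by
        have := hAab
        simp only [Prod.mk.injEq, mnv, mxv, dif_pos hne] at this
        have h1 : A.min' hne = a' := Fin.ext this.1
        exact h1 ▸ A.min'_mem hne
      have hmax : b' ∈ A := by
        have := hAab
        simp only [Prod.mk.injEq, mnv, mxv, dif_pos hne] at this
        have h1 : A.max' hne = b' := Fin.ext this.2
        exact h1 ▸ A.max'_mem hne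
      ext x
      simp only [Finset.mem_insert, Finset.mem_sdiff, Finset.mem_singleton]
      constructor
      · rintro (rfl | rfl | ⟨hx, _⟩) <;> assumption
      · intro hx
        by_cases h1 : x = a'
        · exact Or.inl h1
        by_cases h2 : x = b'
        · exact Or.inr (Or.inl h2)
        · exact Or.inr (Or.inr ⟨hx, by simp [h1, h2]⟩)
    case right_inv =>
      intro S hS
      rw [Finset.mem_powersetCard] at hS
      obtain ⟨hSsub, _⟩ := hS
      have haS : a' ∉ S := fun h => absurd (Finset.mem_Ioo.mp (hSsub h)).1 (lt_irrefl a')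
      have hbS : b' ∉ S := fun h => absurd (Finset.mem_Ioo.mp (hSsub h)).2 (lt_irrefl b')
      ext x
      simp only [Finset.mem_sdiff, Finset.mem_insert, Finset.mem_singleton, not_or]
      constructor
      · rintro ⟨rfl | rfl | hx, h1, h2⟩ <;> first | exact hx | exact absurd rfl h1 | exact absurd rfl h2
      · intro hx
        refine ⟨Or.inr (Or.inr hx), ?_, ?_⟩ <;> rintro rfl <;> contradiction
  rw [key, Finset.card_powersetCard, Fin.card_Ioo]

/-- The set of valid (min, max) pairs. -/
def pairsT (n : ℕ) : Finset (ℕ × ℕ) :=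
  ((Finset.Icc 0 (n - 2)).image fun m => (m, m + 1)) ∪
  ((Finset.Icc 0 (n - 3)).image fun m => (m, m + 2)) ∪
  ((Finset.Icc 1 (n - 5)).image fun m => (m, m + 3)) ∪
  ((Finset.Icc 1 (n - 6)).image fun m => (m, m + 4))

lemma pairsT_valid {n : ℕ} (hn : 7 ≤ n) {p : ℕ × ℕ} (hp : p ∈ pairsT n) :
    p.1 < p.2 ∧ p.2 < n ∧ ncond n p.1 p.2 := by
  obtain ⟨x, y⟩ := p
  simp only [pairsT, Finset.mem_union, Finset.mem_image, Finset.mem_Icc, Prod.mk.injEq] at hp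
  unfold ncond
  rcases hp with ⟨m, hm, h1, h2⟩ | ⟨m, hm, h1, h2⟩ | ⟨m, hm, h1, h2⟩ | ⟨m, hm, h1, h2⟩ <;> omega

lemma mem_pairsT {n : ℕ} (hn : 7 ≤ n) {A : Finset (Fin n)} {k : ℕ} (hk : 2 ≤ k)
    (hA : A ∈ (niComplex n).filter fun A => A.card = k) :
    (mnv A, mxv A) ∈ pairsT n := by
  simp only [Finset.mem_filter] at hA
  obtain ⟨hAc, hAk⟩ := hA
  have hne : A.Nonempty := Finset.card_pos.mp (by omega)
  have hlt : A.min' hne < A.max' hne := Finset.min'_lt_max'_of_card A (by omega)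
  have hc := (face_iff hn hne).mp hAc
  set m := (A.min' hne : ℕ) with hm
  set M := (A.max' hne : ℕ) with hM
  have hmM : m < M := hlt
  have hMn : M < n := (A.max' hne).isLt
  have hmnv : mnv A = m := by simp [mnv, dif_pos hne, hm]
  have hmxv : mxv A = M := by simp [mxv, dif_pos hne, hM]
  rw [hmnv, hmxv]
  simp only [pairsT, Finset.mem_union, Finset.mem_image, Finset.mem_Icc, Prod.mk.injEq]
  unfold ncond at hc
  have hd : M = m + 1 ∨ M = m + 2 ∨ M = m + 3 ∨ M = m + 4 := by omega
  rcases hd with h | h | h | h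
  · exact Or.inl (Or.inl (Or.inl ⟨m, by omega, rfl, by omega⟩))
  · exact Or.inl (Or.inl (Or.inr ⟨m, by omega, rfl, by omega⟩))
  · exact Or.inl (Or.inr ⟨m, by omega, rfl, by omega⟩)
  · exact Or.inr ⟨m, by omega, rfl, by omega⟩

lemma image_disjoint (d1 d2 : ℕ) (h : d1 ≠ d2) (s t : Finset ℕ) :
    Disjoint (s.image fun m => (m, m + d1)) (t.image fun m => (m, m + d2)) := by
  rw [Finset.disjoint_left]
  rintro ⟨x, y⟩ hp1 hp2
  simp only [Finset.mem_image, Prod.mk.injEq] at hp1 hp2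
  obtain ⟨m1, _, h1, h2⟩ := hp1
  obtain ⟨m2, _, h3, h4⟩ := hp2
  omega

lemma sum_image_const {k d : ℕ} (s : Finset ℕ) :
    ∑ p ∈ s.image (fun m => (m, m + d)), (p.2 - p.1 - 1).choose (k - 2)
      = s.card * (d - 1).choose (k - 2) := by
  rw [Finset.sum_image (fun x _ y _ h => by simpa using congrArg Prod.fst h)]
  rw [Finset.sum_congr rfl (fun m _ => by rw [show m + d - m - 1 = d - 1 by omega])]
  rw [Finset.sum_const, smul_eq_mul]

lemma fVec_formula {n : ℕ} (hn : 7 ≤ n) {k : ℕ} (hk : 2 ≤ k) :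
    fVec n k = (n - 1) * Nat.choose 0 (k - 2) + (n - 2) * Nat.choose 1 (k - 2)
      + (n - 5) * Nat.choose 2 (k - 2) + (n - 6) * Nat.choose 3 (k - 2) := by
  unfold fVec
  rw [Finset.card_eq_sum_card_fiberwise (f := fun A => (mnv A, mxv A)) (t := pairsT n)
    (fun A hA => mem_pairsT hn hk hA)]
  rw [show ∑ p ∈ pairsT n, ((Finset.filter (fun A => A.card = k) (niComplex n)).filter
      (fun A => (mnv A, mxv A) = p)).card
      = ∑ p ∈ pairsT n, (p.2 - p.1 - 1).choose (k - 2) from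
    Finset.sum_congr rfl (fun p hp => by
      obtain ⟨h1, h2, h3⟩ := pairsT_valid hn hp
      exact fiber_card hn h1 h2 h3 hk)]
  rw [pairsT]
  rw [Finset.sum_union (Finset.disjoint_union_left.mpr
    ⟨Finset.disjoint_union_left.mpr ⟨image_disjoint 1 4 (by omega) _ _,
      image_disjoint 2 4 (by omega) _ _⟩, image_disjoint 3 4 (by omega) _ _⟩)]
  rw [Finset.sum_union (Finset.disjoint_union_left.mpr
    ⟨image_disjoint 1 3 (by omega) _ _, image_disjoint 2 3 (by omega) _ _⟩)]
  rw [Finset.sum_union (image_disjoint 1 2 (by omega) _ _)]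
  rw [sum_image_const, sum_image_const, sum_image_const, sum_image_const]
  rw [Nat.card_Icc, Nat.card_Icc, Nat.card_Icc, Nat.card_Icc]
  have e1 : n - 2 + 1 - 0 = n - 1 := by omega
  have e2 : n - 3 + 1 - 0 = n - 2 := by omega
  have e3 : n - 5 + 1 - 1 = n - 5 := by omega
  have e4 : n - 6 + 1 - 1 = n - 6 := by omega
  rw [e1, e2, e3, e4]

lemma fVec_zero {n : ℕ} (hn : 7 ≤ n) : fVec n 0 = 1 := by
  unfold fVec
  have : (niComplex n).filter (fun A => A.card = 0) = {∅} := by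
    ext A
    simp only [Finset.mem_filter, Finset.mem_singleton, Finset.card_eq_zero]
    constructor
    · exact fun h => h.2
    · rintro rfl
      exact ⟨mem_niComplex.mpr ⟨faceIcc n 0 2, Finset.mem_insert_self _ _, Finset.empty_subset _⟩, rfl⟩
  rw [this, Finset.card_singleton]

lemma fVec_one {n : ℕ} (hn : 7 ≤ n) : fVec n 1 = n := by
  unfold fVec
  have : (niComplex n).filter (fun A => A.card = 1) = Finset.univ.powersetCard 1 := by
    ext A
    simp only [Finset.mem_filter, Finset.mem_powersetCard]
    constructor
    · exact fun h => ⟨Finset.subset_univ _, h.2⟩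
    · rintro ⟨-, hc⟩
      refine ⟨?_, hc⟩
      obtain ⟨z, rfl⟩ := Finset.card_eq_one.mp hc
      have hne : ({z} : Finset (Fin n)).Nonempty := ⟨z, by simp⟩
      rw [face_iff hn hne]
      simp only [Finset.min'_singleton, Finset.max'_singleton]
      unfold ncond
      have := z.isLt
      omega
  rw [this, Finset.card_powersetCard, Finset.card_univ, Fintype.card_fin, Nat.choose_one_right]

/-- For `n ≥ 7`, the `f`-vector of `NI[P_n²]` is `(1, n, 4n-14, 6n-30, 4n-23, n-6)`. -/
theorem fVector_niComplex (n : ℕ) (hn : 7 ≤ n) :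
    fVec n 0 = 1 ∧ fVec n 1 = n ∧ fVec n 2 = 4 * n - 14 ∧ fVec n 3 = 6 * n - 30 ∧
      fVec n 4 = 4 * n - 23 ∧ fVec n 5 = n - 6 ∧ ∀ i, 6 ≤ i → fVec n i = 0 := by
  have h2 := fVec_formula hn (k := 2) (by norm_num)
  have h3 := fVec_formula hn (k := 3) (by norm_num)
  have h4 := fVec_formula hn (k := 4) (by norm_num)
  have h5 := fVec_formula hn (k := 5) (by norm_num)
  norm_num [Nat.choose] at h2 h3 h4 h5
  refine ⟨fVec_zero hn, fVec_one hn, by omega, by omega, by omega, by omega, ?_⟩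
  intro i hi
  have h := fVec_formula hn (k := i) (by omega)
  have c0 : Nat.choose 0 (i - 2) = 0 := Nat.choose_eq_zero_of_lt (by omega)
  have c1 : Nat.choose 1 (i - 2) = 0 := Nat.choose_eq_zero_of_lt (by omega)
  have c2 : Nat.choose 2 (i - 2) = 0 := Nat.choose_eq_zero_of_lt (by omega)
  have c3 : Nat.choose 3 (i - 2) = 0 := Nat.choose_eq_zero_of_lt (by omega)
  rw [c0, c1, c2, c3] at h
  simpa using h

end
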